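/- arXiv:2206.03774 — 13 statements merged into one kernel-verified Lean document; each statement's English description precedes it below -/
import Mathlib

section
/- Let n ≥ 2 and let a : Fin n → ℝ. Then the following are equivalent: (i) for every x : Fin n → ℝ with x i > 0 for all i, there exists a unique t ∈ ℝ such that ∑ i, x i * exp(a i * t) = 1; (ii) either a i > 0 for all i, or a i < 0 for all i. (Condition (i) says that every coset x·H_a = {(x i · exp(a i · t))ᵢ : t ∈ ℝ} intersects the open probability simplex in exactly one point.) -/
open Real Finset

lemma key_pos (n : ℕ) (hn : 0 < n) (a : Fin n → ℝ) (ha : ∀ i, 0 < a i)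
    (x : Fin n → ℝ) (hx : ∀ i, 0 < x i) :
    ∃! t : ℝ, ∑ i, x i * Real.exp (a i * t) = 1 := by
  set f : ℝ → ℝ := fun t => ∑ i, x i * Real.exp (a i * t) with hf
  have hmono : StrictMono f := by
    intro s t hst
    apply Finset.sum_lt_sum_of_nonempty (by simp [Fin.pos_iff_nonempty.mp hn])
    intro i _
    have := Real.exp_lt_exp.2 (by nlinarith [ha i] : a i * s < a i * t)
    nlinarith [hx i, Real.exp_pos (a i * s)]
  have hcont : Continuous f := by
    apply continuous_finset_sum
    intro i _
    exact (continuous_const.mul ((continuous_const.mul continuous_id).rexp))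
  have i0 : Fin n := ⟨0, hn⟩
  -- upper bound point
  set T : ℝ := max 0 (Real.log (1 / x i0) / a i0) with hT
  have hfT : 1 ≤ f T := by
    have h1 : Real.log (1 / x i0) / a i0 ≤ T := le_max_right _ _
    have h2 : Real.log (1 / x i0) ≤ a i0 * T := by
      rw [div_le_iff₀ (ha i0)] at h1; linarith
    have h3 : 1 / x i0 ≤ Real.exp (a i0 * T) := by
      calc 1 / x i0 = Real.exp (Real.log (1 / x i0)) := by
              rw [Real.exp_log (one_div_pos.mpr (hx i0))]
        _ ≤ _ := Real.exp_le_exp.2 h2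
    have h4 : 1 ≤ x i0 * Real.exp (a i0 * T) := by
      rw [div_le_iff₀ (hx i0)] at h3; linarith
    calc (1:ℝ) ≤ x i0 * Real.exp (a i0 * T) := h4
      _ ≤ f T := Finset.single_le_sum (f := fun i => x i * Real.exp (a i * T))
          (fun i _ => mul_nonneg (hx i).le (Real.exp_pos _).le) (Finset.mem_univ i0)
  -- lower bound point
  have hne : (Finset.univ : Finset (Fin n)).Nonempty := ⟨i0, Finset.mem_univ _⟩
  set m : ℝ := Finset.univ.inf' hne a with hm
  have hm0 : 0 < m := by
    rw [hm, Finset.lt_inf'_iff]; exact fun i _ => ha i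
  set S : ℝ := ∑ i, x i with hS
  have hS0 : 0 < S := Finset.sum_pos (fun i _ => hx i) hne
  set t0 : ℝ := min 0 (Real.log (1 / (2 * S)) / m) with ht0
  have ht0le : t0 ≤ 0 := min_le_left _ _
  have hft0 : f t0 ≤ 1 / 2 := by
    have hle : ∀ i, x i * Real.exp (a i * t0) ≤ x i * Real.exp (m * t0) := by
      intro i
      have hmi : m ≤ a i := Finset.inf'_le _ (Finset.mem_univ i)
      have : a i * t0 ≤ m * t0 := mul_le_mul_of_nonpos_right hmi ht0le
      exact mul_le_mul_of_nonneg_left (Real.exp_le_exp.2 this) (hx i).le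
    have h1 : f t0 ≤ S * Real.exp (m * t0) := by
      calc f t0 ≤ ∑ i, x i * Real.exp (m * t0) := Finset.sum_le_sum (fun i _ => hle i)
        _ = S * Real.exp (m * t0) := by rw [hS, ← Finset.sum_mul]
    have h2 : t0 ≤ Real.log (1 / (2 * S)) / m := min_le_right _ _
    have h3 : m * t0 ≤ Real.log (1 / (2 * S)) := by
      rw [le_div_iff₀ hm0] at h2; linarith
    have h4 : Real.exp (m * t0) ≤ 1 / (2 * S) := by
      calc Real.exp (m * t0) ≤ Real.exp (Real.log (1 / (2 * S))) := Real.exp_le_exp.2 h3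
        _ = 1 / (2 * S) := Real.exp_log (by positivity)
    calc f t0 ≤ S * (1 / (2 * S)) :=
          h1.trans (mul_le_mul_of_nonneg_left h4 hS0.le)
      _ = 1 / 2 := by field_simp
  have htT : t0 ≤ T := le_trans ht0le (le_max_left _ _)
  have hmem : (1:ℝ) ∈ Set.Icc (f t0) (f T) := ⟨by linarith, hfT⟩
  obtain ⟨c, _, hc⟩ := intermediate_value_Icc htT hcont.continuousOn hmem
  exact ⟨c, hc, fun y hy => hmono.injective (hy.trans hc.symm)⟩

/-- Every coset `x·H_a` intersects the open probability simplex in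
exactly one point iff the entries of `a` are all positive or all negative. -/
theorem stmt0 (n : ℕ) (hn : 2 ≤ n) (a : Fin n → ℝ) :
    (∀ x : Fin n → ℝ, (∀ i, 0 < x i) →
      ∃! t : ℝ, ∑ i, x i * Real.exp (a i * t) = 1) ↔
    ((∀ i, 0 < a i) ∨ (∀ i, a i < 0)) := by
  have hn0 : 0 < n := by omega
  constructor
  · intro h
    by_contra hcon
    push_neg at hcon
    obtain ⟨hnp, hnn⟩ := hcon
    obtain ⟨i, hi⟩ := hnp
    obtain ⟨j, hj⟩ := hnn
    -- a i ≤ 0, 0 ≤ a j : with x ≡ 2, the sum is always ≥ 2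
    obtain ⟨t, ht, -⟩ := h (fun _ => 2) (fun _ => by norm_num)
    have hkey : ∀ k : Fin n, 0 ≤ a k * t →
        (2:ℝ) ≤ ∑ i, (fun _ => (2:ℝ)) i * Real.exp (a i * t) := by
      intro k hk
      have h1 : (2:ℝ) ≤ 2 * Real.exp (a k * t) := by
        nlinarith [Real.one_le_exp hk]
      exact h1.trans (Finset.single_le_sum (f := fun i => (2:ℝ) * Real.exp (a i * t))
        (fun i _ => by positivity) (Finset.mem_univ k))
    rcases le_or_gt 0 t with h0 | h0
    · have := hkey j (mul_nonneg hj h0)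
      rw [ht] at this; norm_num at this
    · have := hkey i (by nlinarith)
      rw [ht] at this; norm_num at this
  · rintro (ha | ha) x hx
    · exact key_pos n hn0 a ha x hx
    · obtain ⟨s, hs, hsu⟩ :=
        key_pos n hn0 (fun i => -a i) (fun i => neg_pos.mpr (ha i)) x hx
      refine ⟨-s, by simpa using hs, fun y hy => ?_⟩
      have : -y = s := hsu (-y) (by simpa using hy)
      linarith
end

section
/- Let n ≥ 2. For all λ, μ ∈ Δ° and all c, d ∈ ℝ the following vector-space axioms hold: (i) c ⊙ λ ∈ Δ°; (ii) c ⊙ (λ ⊕ μ) = (c ⊙ λ) ⊕ (c ⊙ μ); (iii) (c + d) ⊙ λ = (c ⊙ λ) ⊕ (d ⊙ λ); (iv) (c * d) ⊙ λ = c ⊙ (d ⊙ λ); (v) 1 ⊙ λ = λ. Hence (Δ°, ⊕, ⊙) is a real vector space. -/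
/-! Both operations are the closure `𝒞 f = f / ∑ f` of a pointwise operation (product, resp.
power), and `𝒞` is insensitive to multiplying by a nonzero constant. Hence an inner `𝒞` can be
dropped under products and powers, and each axiom reduces to a pointwise identity for `rpow`. -/

open Real Finset

/-- The open probability simplex. -/
def simplex' (n : ℕ) : Set (Fin n → ℝ) :=
  {l | (∀ i, 0 < l i) ∧ ∑ i, l i = 1}

/-- The perturbation operation on the open simplex. -/
noncomputable def pert (n : ℕ) (l m : Fin n → ℝ) : Fin n → ℝ :=
  fun i => l i * m i / ∑ j, l j * m j

/-- The powering operation on the open simplex (real powers via `Real.rpow`). -/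
noncomputable def spow (n : ℕ) (c : ℝ) (l : Fin n → ℝ) : Fin n → ℝ :=
  fun i => l i ^ c / ∑ j, l j ^ c

/-- Aitchison's closure operator `𝒞`. -/
noncomputable def normalizeSum {ι : Type*} [Fintype ι] (f : ι → ℝ) : ι → ℝ :=
  fun i => f i / ∑ j, f j

section normalizeSum

variable {ι : Type*} [Fintype ι] {f g : ι → ℝ}

theorem normalizeSum_const_mul {t : ℝ} (ht : t ≠ 0) :
    normalizeSum (fun i => t * f i) = normalizeSum f := by
  funext i
  simp only [normalizeSum, ← mul_sum, mul_div_mul_left _ _ ht]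

theorem normalizeSum_of_sum_eq_one (hf : ∑ i, f i = 1) : normalizeSum f = f := by
  funext i
  simp [normalizeSum, hf]

theorem normalizeSum_mul_normalizeSum (hf : ∑ i, f i ≠ 0) (hg : ∑ i, g i ≠ 0) :
    normalizeSum (fun i => normalizeSum f i * normalizeSum g i) =
      normalizeSum (fun i => f i * g i) := by
  have hprod : ∀ i, normalizeSum f i * normalizeSum g i =
      ((∑ j, f j) * ∑ j, g j)⁻¹ * (f i * g i) := fun i => by
    simp only [normalizeSum]
    field_simp
  simp only [hprod]
  exact normalizeSum_const_mul (inv_ne_zero (mul_ne_zero hf hg))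

theorem normalizeSum_rpow_normalizeSum (hf : ∀ i, 0 ≤ f i) (hsum : 0 < ∑ i, f i) (c : ℝ) :
    normalizeSum (fun i => normalizeSum f i ^ c) = normalizeSum (fun i => f i ^ c) := by
  have hpow : ∀ i, normalizeSum f i ^ c = ((∑ j, f j) ^ c)⁻¹ * f i ^ c := fun i => by
    rw [normalizeSum, div_rpow (hf i) hsum.le, div_eq_inv_mul]
  simp only [hpow]
  exact normalizeSum_const_mul (inv_ne_zero (rpow_pos_of_pos hsum c).ne')

end normalizeSum

theorem spow_eq_normalizeSum (n : ℕ) (c : ℝ) (l : Fin n → ℝ) :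
    spow n c l = normalizeSum (fun i => l i ^ c) := rfl

theorem pert_eq_normalizeSum (n : ℕ) (l m : Fin n → ℝ) :
    pert n l m = normalizeSum (fun i => l i * m i) := rfl

theorem nonempty_of_mem_simplex' {n : ℕ} {l : Fin n → ℝ} (hl : l ∈ simplex' n) :
    Nonempty (Fin n) := by
  obtain ⟨i, -, -⟩ := exists_ne_zero_of_sum_ne_zero (hl.2 ▸ one_ne_zero : ∑ i, l i ≠ 0)
  exact ⟨i⟩

theorem normalizeSum_mem_simplex' {n : ℕ} [Nonempty (Fin n)] {f : Fin n → ℝ}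
    (hf : ∀ i, 0 < f i) : normalizeSum f ∈ simplex' n := by
  have hsum : 0 < ∑ i, f i := sum_pos (fun i _ => hf i) univ_nonempty
  exact ⟨fun i => div_pos (hf i) hsum, by
    simp only [normalizeSum, ← sum_div, div_self hsum.ne']⟩

theorem stmt4_general (n : ℕ) (l m : Fin n → ℝ)
    (hl : l ∈ simplex' n) (hm : m ∈ simplex' n) (c d : ℝ) :
    spow n c l ∈ simplex' n ∧
    spow n c (pert n l m) = pert n (spow n c l) (spow n c m) ∧
    spow n (c + d) l = pert n (spow n c l) (spow n d l) ∧
    spow n (c * d) l = spow n c (spow n d l) ∧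
    spow n 1 l = l := by
  have := nonempty_of_mem_simplex' hl
  obtain ⟨hlpos, hlsum⟩ := hl
  obtain ⟨hmpos, -⟩ := hm
  have hsum_pos : ∀ f : Fin n → ℝ, (∀ i, 0 < f i) → 0 < ∑ i, f i :=
    fun f hf => sum_pos (fun i _ => hf i) univ_nonempty
  have hlpow : ∀ e : ℝ, ∀ i, 0 < l i ^ e := fun e i => rpow_pos_of_pos (hlpos i) e
  have hmpow : ∀ e : ℝ, ∀ i, 0 < m i ^ e := fun e i => rpow_pos_of_pos (hmpos i) e
  have hlm : ∀ i, 0 < l i * m i := fun i => mul_pos (hlpos i) (hmpos i)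
  simp only [spow_eq_normalizeSum, pert_eq_normalizeSum]
  refine ⟨normalizeSum_mem_simplex' (hlpow c), ?_, ?_, ?_, ?_⟩
  · rw [normalizeSum_rpow_normalizeSum (fun i => (hlm i).le) (hsum_pos _ hlm),
      normalizeSum_mul_normalizeSum (hsum_pos _ (hlpow c)).ne' (hsum_pos _ (hmpow c)).ne']
    simp only [mul_rpow (hlpos _).le (hmpos _).le]
  · rw [normalizeSum_mul_normalizeSum (hsum_pos _ (hlpow c)).ne' (hsum_pos _ (hlpow d)).ne']
    simp only [rpow_add (hlpos _)]
  · rw [normalizeSum_rpow_normalizeSum (fun i => (hlpow d i).le) (hsum_pos _ (hlpow d))]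
    simp only [mul_comm c d, rpow_mul (hlpos _).le]
  · simp only [rpow_one]
    exact normalizeSum_of_sum_eq_one hlsum

/-- the vector-space axioms for `(Δ°, ⊕, ⊙)`. -/
theorem stmt4 (n : ℕ) (hn : 2 ≤ n) (l m : Fin n → ℝ)
    (hl : l ∈ simplex' n) (hm : m ∈ simplex' n) (c d : ℝ) :
    spow n c l ∈ simplex' n ∧
    spow n c (pert n l m) = pert n (spow n c l) (spow n c m) ∧
    spow n (c + d) l = pert n (spow n c l) (spow n d l) ∧
    spow n (c * d) l = spow n c (spow n d l) ∧
    spow n 1 l = l :=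
  stmt4_general n l m hl hm c d
end

section
/- Let n ≥ 2. Define Log₁ : Δ° → (Fin n → ℝ) by Log₁(λ) i = (1/n) * ln(λ i) − (1/n²) * ∑ j, ln(λ j), and Exp₁ : H → (Fin n → ℝ) by Exp₁(ξ) i = exp(n * ξ i) / ∑ j, exp(n * ξ j), where H = {ξ : Fin n → ℝ | ∑ i, ξ i = 0}. Then: (i) Log₁(λ) ∈ H for every λ ∈ Δ°; (ii) Log₁(λ ⊕ μ) = Log₁(λ) + Log₁(μ) and Log₁(c ⊙ λ) = c • Log₁(λ) for all λ, μ ∈ Δ° and c ∈ ℝ; (iii) Exp₁(ξ) ∈ Δ° for every ξ ∈ H; (iv) Log₁(Exp₁(ξ)) = ξ for all ξ ∈ H and Exp₁(Log₁(λ)) = λ for all λ ∈ Δ°, so Log₁ is a bijection from Δ° onto H with inverse Exp₁. -/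
/-!
`Log1 n l` is the linear map `scaledCenter n a i = (a i - mean a) / n` applied to `a = log ∘ l`.
Perturbation, powering and `Exp1` all normalize a positive vector `x` to `x / ∑ x`; on the log
side normalizing only subtracts a constant, which `scaledCenter` kills. So `Log1` turns `⊕` and
`⊙` into `+` and `•`, and lands in `H`. Conversely, `n • Log1 n l` is `log ∘ l` up to a
constant, and softmax ignores constants, so `Exp1` undoes `Log1`.
-/

open Real Finset

/-- The quotient logarithm map `Log₁` (centered log-ratio up to the factor `n`). -/
noncomputable def Log1 (n : ℕ) (l : Fin n → ℝ) : Fin n → ℝ :=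
  fun i => (1 / (n : ℝ)) * Real.log (l i) - (1 / (n : ℝ) ^ 2) * ∑ j, Real.log (l j)

/-- The quotient exponential map `Exp₁` (softmax). -/
noncomputable def Exp1 (n : ℕ) (ξ : Fin n → ℝ) : Fin n → ℝ :=
  fun i => Real.exp ((n : ℝ) * ξ i) / ∑ j, Real.exp ((n : ℝ) * ξ j)

theorem log_div_sum_of_pos {ι : Type*} [Fintype ι] {x : ι → ℝ} (hx : ∀ j, 0 < x j) (i : ι) :
    log (x i / ∑ j, x j) = log (x i) - log (∑ j, x j) :=
  log_div (hx i).ne' (sum_pos (fun j _ => hx j) ⟨i, mem_univ i⟩).ne'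

theorem div_sum_mem_simplex' {n : ℕ} (hn : n ≠ 0) {x : Fin n → ℝ} (hx : ∀ j, 0 < x j) :
    (fun i => x i / ∑ j, x j) ∈ simplex' n := by
  have hsum : 0 < ∑ j, x j := sum_pos (fun j _ => hx j) ⟨⟨0, by omega⟩, mem_univ _⟩
  exact ⟨fun i => div_pos (hx i) hsum, by rw [← sum_div, div_self hsum.ne']⟩

noncomputable def scaledCenter (n : ℕ) (a : Fin n → ℝ) : Fin n → ℝ :=
  fun i => (1 / (n : ℝ)) * a i - (1 / (n : ℝ) ^ 2) * ∑ j, a j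

namespace scaledCenter

variable {n : ℕ}

theorem sum_eq_zero (hn : n ≠ 0) (a : Fin n → ℝ) : ∑ i, scaledCenter n a i = 0 := by
  have hn' : (n : ℝ) ≠ 0 := Nat.cast_ne_zero.mpr hn
  simp only [scaledCenter, sum_sub_distrib, ← mul_sum, sum_const, card_univ, Fintype.card_fin,
    nsmul_eq_mul]
  field_simp
  ring

theorem add (a b : Fin n → ℝ) :
    scaledCenter n (a + b) = scaledCenter n a + scaledCenter n b := by
  funext i
  simp only [scaledCenter, Pi.add_apply, sum_add_distrib]
  ring

theorem smul (c : ℝ) (a : Fin n → ℝ) : scaledCenter n (c • a) = c • scaledCenter n a := by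
  funext i
  simp only [scaledCenter, Pi.smul_apply, smul_eq_mul, ← mul_sum]
  ring

theorem sub_const (hn : n ≠ 0) (a : Fin n → ℝ) (C : ℝ) :
    scaledCenter n (fun i => a i - C) = scaledCenter n a := by
  have hn' : (n : ℝ) ≠ 0 := Nat.cast_ne_zero.mpr hn
  funext i
  simp only [scaledCenter, sum_sub_distrib, sum_const, card_univ, Fintype.card_fin, nsmul_eq_mul]
  field_simp
  ring

theorem natCast_smul_of_sum_eq_zero (hn : n ≠ 0) {ξ : Fin n → ℝ} (hξ : ∑ i, ξ i = 0) :
    scaledCenter n ((n : ℝ) • ξ) = ξ := by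
  have hn' : (n : ℝ) ≠ 0 := Nat.cast_ne_zero.mpr hn
  funext i
  simp only [scaledCenter, Pi.smul_apply, smul_eq_mul, ← mul_sum, hξ]
  field_simp
  ring

end scaledCenter

section LogExp

variable {n : ℕ}

theorem Log1_eq_scaledCenter (l : Fin n → ℝ) : Log1 n l = scaledCenter n (fun i => log (l i)) :=
  rfl

theorem Log1_div_sum (hn : n ≠ 0) {x : Fin n → ℝ} (hx : ∀ j, 0 < x j) :
    Log1 n (fun i => x i / ∑ j, x j) = scaledCenter n (fun i => log (x i)) := by
  rw [Log1_eq_scaledCenter]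
  simp only [log_div_sum_of_pos hx]
  exact scaledCenter.sub_const hn _ _

theorem Log1_pert (hn : n ≠ 0) {l m : Fin n → ℝ} (hl : ∀ i, 0 < l i) (hm : ∀ i, 0 < m i) :
    Log1 n (pert n l m) = Log1 n l + Log1 n m := by
  have hlog : (fun i => log (l i * m i)) = (fun i => log (l i)) + fun i => log (m i) := by
    funext i
    exact log_mul (hl i).ne' (hm i).ne'
  unfold pert
  rw [Log1_div_sum hn (fun i => mul_pos (hl i) (hm i)), hlog, scaledCenter.add]
  rfl

theorem Log1_spow (hn : n ≠ 0) {l : Fin n → ℝ} (hl : ∀ i, 0 < l i) (c : ℝ) :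
    Log1 n (spow n c l) = c • Log1 n l := by
  have hlog : (fun i => log (l i ^ c)) = c • fun i => log (l i) := by
    funext i
    exact log_rpow (hl i) c
  unfold spow
  rw [Log1_div_sum hn (fun i => rpow_pos_of_pos (hl i) c), hlog, scaledCenter.smul]
  rfl

theorem Exp1_mem_simplex' (hn : n ≠ 0) (ξ : Fin n → ℝ) : Exp1 n ξ ∈ simplex' n :=
  div_sum_mem_simplex' hn fun _ => exp_pos _

theorem Log1_Exp1 (hn : n ≠ 0) {ξ : Fin n → ℝ} (hξ : ∑ i, ξ i = 0) : Log1 n (Exp1 n ξ) = ξ := by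
  unfold Exp1
  rw [Log1_div_sum hn fun _ => exp_pos _]
  simp only [log_exp]
  exact scaledCenter.natCast_smul_of_sum_eq_zero hn hξ

theorem natCast_mul_Log1_apply (hn : n ≠ 0) (l : Fin n → ℝ) (i : Fin n) :
    (n : ℝ) * Log1 n l i = log (l i) - (∑ j, log (l j)) / n := by
  have hn' : (n : ℝ) ≠ 0 := Nat.cast_ne_zero.mpr hn
  simp only [Log1]
  field_simp

theorem Exp1_Log1 (hn : n ≠ 0) {l : Fin n → ℝ} (hl : l ∈ simplex' n) : Exp1 n (Log1 n l) = l := by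
  set C := (∑ j, log (l j)) / n
  have hexp : ∀ i, exp ((n : ℝ) * Log1 n l i) = l i * exp (-C) := fun i => by
    rw [natCast_mul_Log1_apply hn, sub_eq_add_neg, exp_add, exp_log (hl.1 i)]
  funext i
  simp only [Exp1, hexp, ← sum_mul, mul_div_mul_right _ _ (exp_ne_zero _), hl.2, div_one]

end LogExp

/-- `Log₁` is a linear bijection from `(Δ°, ⊕, ⊙)` onto the
hyperplane `H = {ξ | ∑ i, ξ i = 0}` with inverse `Exp₁`. -/
theorem stmt5 (n : ℕ) (hn : 2 ≤ n) :
    (∀ l, l ∈ simplex' n → ∑ i, Log1 n l i = 0) ∧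
    (∀ l m, l ∈ simplex' n → m ∈ simplex' n →
      Log1 n (pert n l m) = Log1 n l + Log1 n m) ∧
    (∀ l, l ∈ simplex' n → ∀ c : ℝ, Log1 n (spow n c l) = c • Log1 n l) ∧
    (∀ ξ : Fin n → ℝ, ∑ i, ξ i = 0 → Exp1 n ξ ∈ simplex' n) ∧
    (∀ ξ : Fin n → ℝ, ∑ i, ξ i = 0 → Log1 n (Exp1 n ξ) = ξ) ∧
    (∀ l, l ∈ simplex' n → Exp1 n (Log1 n l) = l) := by
  have hn0 : n ≠ 0 := by omega
  exact ⟨fun l _ => scaledCenter.sum_eq_zero hn0 _,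
    fun _ _ hl hm => Log1_pert hn0 hl.1 hm.1,
    fun _ hl c => Log1_spow hn0 hl.1 c,
    fun ξ _ => Exp1_mem_simplex' hn0 ξ,
    fun _ hξ => Log1_Exp1 hn0 hξ,
    fun _ hl => Exp1_Log1 hn0 hl⟩
end

section
/- Let n ≥ 2, let a : Fin n → ℝ with a i > 0 for all i, let t₀ ∈ ℝ satisfy ∑ i, exp(a i * t₀) = 1, set e i = exp(a i * t₀) and S = ∑ k, a k * e k, and define L(λ) i = e i * (ln(λ i) − (a i / S) * ∑ j, e j * ln(λ j)) for λ ∈ Δ°. Then L is a bijection from Δ° onto the hyperplane H = {ξ : Fin n → ℝ | ∑ i, ξ i = 0}; that is: (i) ∑ i, L(λ) i = 0 for every λ ∈ Δ°; (ii) L is injective on Δ°; (iii) for every ξ with ∑ i, ξ i = 0 there exists λ ∈ Δ° with L(λ) = ξ. -/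
open Real Finset

lemma aux_c_eq_zero {n : ℕ} [NeZero n] (m : Fin n → ℝ) (hm : ∀ i, 0 < m i)
    (a : Fin n → ℝ) (ha : ∀ i, 0 < a i) (c : ℝ)
    (h : ∑ i, m i * Real.exp (a i * c) = ∑ i, m i) : c = 0 := by
  have hne : (Finset.univ : Finset (Fin n)).Nonempty := Finset.univ_nonempty
  rcases lt_trichotomy c 0 with hc | hc | hc
  · exfalso
    have : ∑ i, m i * Real.exp (a i * c) < ∑ i, m i := by
      apply Finset.sum_lt_sum_of_nonempty hne
      intro i _
      have : Real.exp (a i * c) < 1 := by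
        rw [Real.exp_lt_one_iff]
        exact mul_neg_of_pos_of_neg (ha i) hc
      nlinarith [hm i]
    linarith
  · exact hc
  · exfalso
    have : ∑ i, m i < ∑ i, m i * Real.exp (a i * c) := by
      apply Finset.sum_lt_sum_of_nonempty hne
      intro i _
      have : 1 < Real.exp (a i * c) := by
        rw [show (1:ℝ) = Real.exp 0 from Real.exp_zero.symm]
        exact Real.exp_lt_exp.mpr (mul_pos (ha i) hc)
      nlinarith [hm i]
    linarith

/-- the quotient logarithm map `L = Log_{C_a}` is a bijection from
the open simplex onto the hyperplane `{ξ | ∑ i, ξ i = 0}`. -/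
theorem stmt6 (n : ℕ) (hn : 2 ≤ n) (a : Fin n → ℝ) (ha : ∀ i, 0 < a i)
    (t₀ : ℝ) (ht₀ : (∑ i, Real.exp (a i * t₀)) = 1)
    (e : Fin n → ℝ) (he : ∀ i, e i = Real.exp (a i * t₀))
    (S : ℝ) (hS : S = ∑ k, a k * e k)
    (L : (Fin n → ℝ) → Fin n → ℝ)
    (hL : ∀ l i, L l i =
      e i * (Real.log (l i) - (a i / S) * ∑ j, e j * Real.log (l j))) :
    (∀ l, l ∈ simplex' n → ∑ i, L l i = 0) ∧
    (∀ l m, l ∈ simplex' n → m ∈ simplex' n → L l = L m → l = m) ∧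
    (∀ ξ : Fin n → ℝ, ∑ i, ξ i = 0 → ∃ l, l ∈ simplex' n ∧ L l = ξ) := by
  have hnpos : 0 < n := by omega
  haveI : NeZero n := ⟨by omega⟩
  have hne : (Finset.univ : Finset (Fin n)).Nonempty := Finset.univ_nonempty
  have hepos : ∀ i, 0 < e i := fun i => (he i).symm ▸ Real.exp_pos _
  have hSpos : 0 < S := by
    rw [hS]
    exact Finset.sum_pos (fun i _ => mul_pos (ha i) (hepos i)) hne
  have hSne : S ≠ 0 := ne_of_gt hSpos
  refine ⟨?_, ?_, ?_⟩
  · -- sum zero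
    intro l _
    set T := ∑ j, e j * Real.log (l j) with hT
    have h1 : ∀ i, L l i = e i * Real.log (l i) - (T / S) * (a i * e i) := by
      intro i; rw [hL]; ring
    rw [Finset.sum_congr rfl (fun i _ => h1 i), Finset.sum_sub_distrib,
      ← Finset.mul_sum, ← hS, ← hT, div_mul_cancel₀ _ hSne, sub_self]
  · -- injective
    intro l m hl hm hLm
    set Tl := ∑ j, e j * Real.log (l j) with hTl
    set Tm := ∑ j, e j * Real.log (m j) with hTm
    set c := (Tl - Tm) / S with hc
    have key : ∀ i, l i = m i * Real.exp (a i * c) := by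
      intro i
      have h1 := hL l i
      have h2 := hL m i
      have h3 : L l i = L m i := congrFun hLm i
      rw [h1, h2] at h3
      have h4 : Real.log (l i) - (a i / S) * Tl
          = Real.log (m i) - (a i / S) * Tm :=
        mul_left_cancel₀ (ne_of_gt (hepos i)) h3
      have h5 : Real.log (l i) = Real.log (m i) + a i * c := by
        rw [hc]; field_simp at h4 ⊢; linarith
      have : l i = Real.exp (Real.log (l i)) := (Real.exp_log (hl.1 i)).symm
      rw [this, h5, Real.exp_add, Real.exp_log (hm.1 i)]
    have hsum : ∑ i, m i * Real.exp (a i * c) = ∑ i, m i := by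
      rw [← Finset.sum_congr rfl (fun i _ => key i), hl.2, hm.2]
    have hc0 : c = 0 := aux_c_eq_zero m hm.1 a ha c hsum
    funext i
    rw [key i, hc0, mul_zero, Real.exp_zero, mul_one]
  · -- surjective
    intro ξ hξ
    set b : Fin n → ℝ := fun i => ξ i / e i with hb
    set g : ℝ → ℝ := fun s => ∑ i, Real.exp (b i + a i * s) with hg
    have hgc : Continuous g := by
      apply continuous_finset_sum
      intro i _
      exact Real.continuous_exp.comp (continuous_const.add (continuous_const.mul continuous_id))
    have hbot : Filter.Tendsto g Filter.atBot (nhds 0) := by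
      have : Filter.Tendsto g Filter.atBot (nhds (∑ _i : Fin n, (0 : ℝ))) := by
        apply tendsto_finset_sum
        intro i _
        apply Real.tendsto_exp_atBot.comp
        apply Filter.tendsto_atBot_add_const_left
        exact Filter.Tendsto.const_mul_atBot (ha i) Filter.tendsto_id
      simpa using this
    have htop : Filter.Tendsto g Filter.atTop Filter.atTop := by
      obtain ⟨i₀⟩ : Nonempty (Fin n) := ⟨⟨0, hnpos⟩⟩
      apply Filter.tendsto_atTop_mono
        (f := fun s => Real.exp (b i₀ + a i₀ * s))
      · intro s
        exact Finset.single_le_sum (f := fun i => Real.exp (b i + a i * s))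
          (fun i _ => (Real.exp_pos _).le) (Finset.mem_univ i₀)
      · apply Real.tendsto_exp_atTop.comp
        apply Filter.tendsto_atTop_add_const_left
        exact Filter.Tendsto.const_mul_atTop (ha i₀) Filter.tendsto_id
    obtain ⟨s₁, hs₁⟩ : ∃ s, g s ≤ 1 := by
      have := hbot.eventually (gt_mem_nhds (by norm_num : (0:ℝ) < 1))
      exact this.exists.imp fun s hs => hs.le
    obtain ⟨s₂, hs₂⟩ : ∃ s, 1 ≤ g s := (htop.eventually_ge_atTop 1).exists
    obtain ⟨s, hsg⟩ : ∃ s, g s = 1 := by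
      have := intermediate_value_univ s₁ s₂ hgc
      exact this ⟨hs₁, hs₂⟩
    refine ⟨fun i => Real.exp (b i + a i * s), ⟨fun i => Real.exp_pos _, hsg⟩, ?_⟩
    funext i
    have hlog : ∀ j, Real.log (Real.exp (b j + a j * s)) = b j + a j * s :=
      fun j => Real.log_exp _
    have hT : (∑ j, e j * Real.log (Real.exp (b j + a j * s))) = s * S := by
      have : ∀ j, e j * (b j + a j * s) = ξ j + s * (a j * e j) := by
        intro j
        rw [hb]
        field_simp [ne_of_gt (hepos j)]
      simp only [hlog]
      rw [Finset.sum_congr rfl (fun j _ => this j), Finset.sum_add_distrib, hξ,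
        ← Finset.mul_sum, hS]
      ring
    rw [hL, hlog, hT, hb]
    field_simp [ne_of_gt (hepos i)]
    ring
end

section
/- Let n ≥ 2, let a : Fin n → ℝ with a i > 0 for all i, let t₀ ∈ ℝ satisfy ∑ i, exp(a i * t₀) = 1, set e i = exp(a i * t₀) and S = ∑ k, a k * e k, and define L(λ) i = e i * (ln(λ i) − (a i / S) * ∑ j, e j * ln(λ j)). Let λ, μ ∈ Δ° and let s ∈ ℝ satisfy ∑ i, λ i * μ i * exp(a i * s) = 1; let ν denote the point ν i = λ i * μ i * exp(a i * s) of Δ° (the quotient group operation λ ⊕_a μ). Then L(ν) = L(λ) + L(μ), i.e., L is a group homomorphism from (Δ°, ⊕_a) to (H, +). -/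
open Real Finset

/-- the quotient logarithm map `L = Log_{C_a}` is a group
homomorphism from `(Δ°, ⊕_a)` to `(H, +)`. -/
theorem stmt7 (n : ℕ) (hn : 2 ≤ n) (a : Fin n → ℝ) (ha : ∀ i, 0 < a i)
    (t₀ : ℝ) (ht₀ : (∑ i, Real.exp (a i * t₀)) = 1)
    (e : Fin n → ℝ) (he : ∀ i, e i = Real.exp (a i * t₀))
    (S : ℝ) (hS : S = ∑ k, a k * e k)
    (L : (Fin n → ℝ) → Fin n → ℝ)
    (hL : ∀ l i, L l i =
      e i * (Real.log (l i) - (a i / S) * ∑ j, e j * Real.log (l j)))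
    (l m : Fin n → ℝ) (hl : l ∈ simplex' n) (hm : m ∈ simplex' n)
    (s : ℝ) (hs : (∑ i, l i * m i * Real.exp (a i * s)) = 1)
    (ν : Fin n → ℝ) (hν : ∀ i, ν i = l i * m i * Real.exp (a i * s)) :
    L ν = L l + L m := by
  have hSpos : 0 < S := by
    rw [hS]
    apply Finset.sum_pos
    · intro k _
      have : 0 < e k := by rw [he]; exact Real.exp_pos _
      exact mul_pos (ha k) this
    · exact Finset.univ_nonempty_iff.mpr (Fin.pos_iff_nonempty.mp (by omega))
  have hS0 : S ≠ 0 := ne_of_gt hSpos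
  have hlog : ∀ j, Real.log (ν j) = Real.log (l j) + Real.log (m j) + a j * s := by
    intro j
    rw [hν j, Real.log_mul (mul_ne_zero (ne_of_gt (hl.1 j)) (ne_of_gt (hm.1 j))) (Real.exp_ne_zero _),
      Real.log_mul (ne_of_gt (hl.1 j)) (ne_of_gt (hm.1 j)), Real.log_exp]
  have hsum : (∑ j, e j * Real.log (ν j)) =
      (∑ j, e j * Real.log (l j)) + (∑ j, e j * Real.log (m j)) + S * s := by
    have : ∀ j ∈ Finset.univ, e j * Real.log (ν j) =
        e j * Real.log (l j) + e j * Real.log (m j) + a j * e j * s := by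
      intro j _; rw [hlog j]; ring
    rw [Finset.sum_congr rfl this, Finset.sum_add_distrib, Finset.sum_add_distrib, hS,
      Finset.sum_mul]
  funext i
  have : (a i / S) * (S * s) = a i * s := by field_simp
  simp only [Pi.add_apply, hL, hlog i, hsum]
  rw [mul_add, mul_add, this]
  ring
end

section
/- Let n ≥ 2, let a : Fin n → ℝ with a i > 0 for all i, let t₀ ∈ ℝ satisfy ∑ i, exp(a i * t₀) = 1, set e i = exp(a i * t₀) and S = ∑ k, a k * e k, and define L(λ) i = e i * (ln(λ i) − (a i / S) * ∑ j, e j * ln(λ j)). Let λ ∈ Δ° and let s ∈ ℝ satisfy ∑ i, exp(a i * s) / λ i = 1, so that λ⁻ given by λ⁻ i = exp(a i * s) / λ i is the inverse of λ in the quotient group (Δ°, ⊕_a). Then L(λ⁻) = −L(λ). -/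
open Real Finset

/-!
`L(λ) = P (log λ)` for the linear map `P v = e ⊙ (v - (⟨e, v⟩ / ⟨e, a⟩) a)`, which is
(up to the factor `e`) the projection onto `e⊥` along `a`, so `P a = 0`. Since
`log λ⁻ = s a - log λ`, linearity gives `L(λ⁻) = s P a - P (log λ) = -L(λ)`.
-/

section

variable {ι : Type*} [Fintype ι]

noncomputable def weightedProjAlong (a e : ι → ℝ) : (ι → ℝ) →ₗ[ℝ] ι → ℝ where
  toFun v i := e i * (v i - a i / (∑ k, a k * e k) * ∑ j, e j * v j)
  map_add' v w := by
    ext i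
    simp only [Pi.add_apply, mul_add, sum_add_distrib]
    ring
  map_smul' c v := by
    ext i
    simp only [Pi.smul_apply, smul_eq_mul, RingHom.id_apply, mul_left_comm _ c, ← mul_sum]
    ring

theorem weightedProjAlong_apply (a e v : ι → ℝ) (i : ι) :
    weightedProjAlong a e v i = e i * (v i - a i / (∑ k, a k * e k) * ∑ j, e j * v j) :=
  rfl

theorem weightedProjAlong_self {a e : ι → ℝ} (hS : ∑ k, a k * e k ≠ 0) :
    weightedProjAlong a e a = 0 := by
  ext i
  have hcomm : ∑ j, e j * a j = ∑ k, a k * e k := sum_congr rfl fun _ _ => mul_comm _ _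
  rw [weightedProjAlong_apply, hcomm, div_mul_cancel₀ _ hS, sub_self, mul_zero, Pi.zero_apply]

end

theorem stmt8_general (n : ℕ) (a : Fin n → ℝ) (ha : ∀ i, 0 < a i)
    (t₀ : ℝ)
    (e : Fin n → ℝ) (he : ∀ i, e i = Real.exp (a i * t₀))
    (S : ℝ) (hS : S = ∑ k, a k * e k)
    (L : (Fin n → ℝ) → Fin n → ℝ)
    (hL : ∀ l i, L l i =
      e i * (Real.log (l i) - (a i / S) * ∑ j, e j * Real.log (l j)))
    (l : Fin n → ℝ) (hl : l ∈ simplex' n)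
    (s : ℝ)
    (linv : Fin n → ℝ) (hlinv : ∀ i, linv i = Real.exp (a i * s) / l i) :
    L linv = -L l := by
  have hL' : ∀ m, L m = weightedProjAlong a e (fun i => log (m i)) := fun m => by
    ext i
    rw [hL, weightedProjAlong_apply, hS]
  have hlog_inv : (fun i => log (linv i)) = s • a - fun i => log (l i) := by
    ext i
    rw [hlinv, log_div (exp_ne_zero _) (hl.1 i).ne', log_exp, Pi.sub_apply, Pi.smul_apply,
      smul_eq_mul, mul_comm]
  ext i
  have hS_pos : 0 < ∑ k, a k * e k :=
    sum_pos (fun k _ => mul_pos (ha k) (he k ▸ exp_pos _)) ⟨i, mem_univ i⟩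
  rw [hL', hL', hlog_inv, map_sub, map_smul, weightedProjAlong_self hS_pos.ne', smul_zero,
    zero_sub]

/-- the quotient logarithm `L = Log_{C_a}` sends the `⊕_a`-inverse
of `λ` to `-L(λ)`. -/
theorem stmt8 (n : ℕ) (hn : 2 ≤ n) (a : Fin n → ℝ) (ha : ∀ i, 0 < a i)
    (t₀ : ℝ) (ht₀ : (∑ i, Real.exp (a i * t₀)) = 1)
    (e : Fin n → ℝ) (he : ∀ i, e i = Real.exp (a i * t₀))
    (S : ℝ) (hS : S = ∑ k, a k * e k)
    (L : (Fin n → ℝ) → Fin n → ℝ)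
    (hL : ∀ l i, L l i =
      e i * (Real.log (l i) - (a i / S) * ∑ j, e j * Real.log (l j)))
    (l : Fin n → ℝ) (hl : l ∈ simplex' n)
    (s : ℝ) (hs : (∑ i, Real.exp (a i * s) / l i) = 1)
    (linv : Fin n → ℝ) (hlinv : ∀ i, linv i = Real.exp (a i * s) / l i) :
    L linv = -L l :=
  stmt8_general n a ha t₀ e he S hS L hL l hl s linv hlinv
end

section
/- Let n ≥ 2, let a : Fin n → ℝ with a i > 0 for all i, let t₀ ∈ ℝ satisfy ∑ i, exp(a i * t₀) = 1, set e i = exp(a i * t₀) and S = ∑ k, a k * e k, and define d_a on Δ° by d_a(λ,μ)² = ∑ i, (e i)² * (ln(λ i/μ i) − (a i/S) * ∑ j, e j * ln(λ j/μ j))². Let γ, λ, μ ∈ Δ° and let s, u ∈ ℝ satisfy ∑ i, γ i * λ i * exp(a i * s) = 1 and ∑ i, γ i * μ i * exp(a i * u) = 1, so that γ ⊕_a λ = (γ i * λ i * exp(a i * s))ᵢ and γ ⊕_a μ = (γ i * μ i * exp(a i * u))ᵢ. Then d_a(γ ⊕_a λ, γ ⊕_a μ) = d_a(λ, μ), i.e.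 the distance d_a is invariant under the quotient group translations. -/
open Real Finset

/-- the distance `d_a` is invariant under the quotient group
translations `γ ⊕_a ·`.  Here `d_a` is encoded through its square `dsq`. -/
theorem stmt10 (n : ℕ) (hn : 2 ≤ n) (a : Fin n → ℝ) (ha : ∀ i, 0 < a i)
    (t₀ : ℝ) (ht₀ : (∑ i, Real.exp (a i * t₀)) = 1)
    (e : Fin n → ℝ) (he : ∀ i, e i = Real.exp (a i * t₀))
    (S : ℝ) (hS : S = ∑ k, a k * e k)
    (dsq : (Fin n → ℝ) → (Fin n → ℝ) → ℝ)
    (hdsq : ∀ l m, dsq l m = ∑ i, (e i) ^ 2 *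
      (Real.log (l i / m i) - (a i / S) * ∑ j, e j * Real.log (l j / m j)) ^ 2)
    (γ l m : Fin n → ℝ)
    (hγ : γ ∈ simplex' n) (hl : l ∈ simplex' n) (hm : m ∈ simplex' n)
    (s u : ℝ)
    (hs : (∑ i, γ i * l i * Real.exp (a i * s)) = 1)
    (hu : (∑ i, γ i * m i * Real.exp (a i * u)) = 1) :
    Real.sqrt (dsq (fun i => γ i * l i * Real.exp (a i * s))
        (fun i => γ i * m i * Real.exp (a i * u)))
      = Real.sqrt (dsq l m) := by
  have hS0 : S ≠ 0 := by
    rw [hS]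
    have : 0 < ∑ k, a k * e k := by
      apply Finset.sum_pos
      · intro k _
        exact mul_pos (ha k) (by rw [he k]; exact Real.exp_pos _)
      · have : Nonempty (Fin n) := ⟨⟨0, by omega⟩⟩
        exact Finset.univ_nonempty
    linarith
  have hlog : ∀ j, Real.log ((γ j * l j * Real.exp (a j * s)) /
      (γ j * m j * Real.exp (a j * u))) = Real.log (l j / m j) + a j * (s - u) := by
    intro j
    have hγj := hγ.1 j
    have hlj := hl.1 j
    have hmj := hm.1 j
    have hratio : (γ j * l j * Real.exp (a j * s)) / (γ j * m j * Real.exp (a j * u))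
        = (l j / m j) * Real.exp (a j * (s - u)) := by
      rw [mul_sub, Real.exp_sub]
      field_simp
    rw [hratio, Real.log_mul (div_ne_zero hlj.ne' hmj.ne') (Real.exp_ne_zero _),
      Real.log_exp]
  congr 1
  rw [hdsq, hdsq]
  have hsum : (∑ j, e j * Real.log ((γ j * l j * Real.exp (a j * s)) /
      (γ j * m j * Real.exp (a j * u))))
      = (∑ j, e j * Real.log (l j / m j)) + S * (s - u) := by
    rw [hS, Finset.sum_mul, ← Finset.sum_add_distrib]
    apply Finset.sum_congr rfl
    intro j _
    rw [hlog j]; ring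
  apply Finset.sum_congr rfl
  intro i _
  simp only [hlog i, hsum]
  congr 1
  field_simp
  ring
end

section
/- Let n ≥ 2, let a : Fin n → ℝ with a i > 0 for all i, let t₀ ∈ ℝ satisfy ∑ i, exp(a i * t₀) = 1, set e i = exp(a i * t₀) and S = ∑ k, a k * e k, and define d_a(λ,μ) = √(∑ i, (e i)² * (ln(λ i/μ i) − (a i/S) * ∑ j, e j * ln(λ j/μ j))²) for λ, μ ∈ Δ°. Then d_a is a metric on Δ°: (i) d_a(λ,μ) ≥ 0, with d_a(λ,μ) = 0 if and only if λ = μ; (ii) d_a(λ,μ) = d_a(μ,λ); (iii) d_a(λ,ν) ≤ d_a(λ,μ) + d_a(μ,ν) for all λ, μ, ν ∈ Δ°. -/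
open Real Finset

lemma sqrt_sum_sq_add_le {n : ℕ} (u v : Fin n → ℝ) :
    Real.sqrt (∑ i, (u i + v i) ^ 2) ≤
      Real.sqrt (∑ i, (u i) ^ 2) + Real.sqrt (∑ i, (v i) ^ 2) := by
  have h := norm_add_le ((EuclideanSpace.equiv (Fin n) ℝ).symm u)
    ((EuclideanSpace.equiv (Fin n) ℝ).symm v)
  simpa [EuclideanSpace.norm_eq, Real.norm_eq_abs, sq_abs] using h

/-- `d_a` is a metric on the open simplex: nonnegative and
vanishing exactly on the diagonal, symmetric, and satisfying the triangle
inequality. -/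
theorem stmt11 (n : ℕ) (hn : 2 ≤ n) (a : Fin n → ℝ) (ha : ∀ i, 0 < a i)
    (t₀ : ℝ) (ht₀ : (∑ i, Real.exp (a i * t₀)) = 1)
    (e : Fin n → ℝ) (he : ∀ i, e i = Real.exp (a i * t₀))
    (S : ℝ) (hS : S = ∑ k, a k * e k)
    (d : (Fin n → ℝ) → (Fin n → ℝ) → ℝ)
    (hd : ∀ l m, d l m = Real.sqrt (∑ i, (e i) ^ 2 *
      (Real.log (l i / m i) - (a i / S) * ∑ j, e j * Real.log (l j / m j)) ^ 2)) :
    (∀ l m, l ∈ simplex' n → m ∈ simplex' n →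
      0 ≤ d l m ∧ (d l m = 0 ↔ l = m)) ∧
    (∀ l m, l ∈ simplex' n → m ∈ simplex' n → d l m = d m l) ∧
    (∀ l m p, l ∈ simplex' n → m ∈ simplex' n → p ∈ simplex' n →
      d l p ≤ d l m + d m p) := by
  have hne : (Finset.univ : Finset (Fin n)).Nonempty :=
    ⟨⟨0, by omega⟩, Finset.mem_univ _⟩
  have hepos : ∀ i, 0 < e i := fun i => (he i) ▸ Real.exp_pos _
  have hSpos : 0 < S := by
    rw [hS]
    exact Finset.sum_pos (fun i _ => mul_pos (ha i) (hepos i)) hne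
  refine ⟨?_, ?_, ?_⟩
  · intro l m hl hm
    refine ⟨(hd l m) ▸ Real.sqrt_nonneg _, ?_, ?_⟩
    · intro h0
      rw [hd] at h0
      have hnn : ∀ i ∈ Finset.univ, (0:ℝ) ≤ (e i) ^ 2 *
          (Real.log (l i / m i) - (a i / S) * ∑ j, e j * Real.log (l j / m j)) ^ 2 :=
        fun i _ => mul_nonneg (sq_nonneg _) (sq_nonneg _)
      have hsum0 : (∑ i, (e i) ^ 2 *
          (Real.log (l i / m i) - (a i / S) * ∑ j, e j * Real.log (l j / m j)) ^ 2) = 0 :=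
        (Real.sqrt_eq_zero (Finset.sum_nonneg hnn)).mp h0
      have hterm := (Finset.sum_eq_zero_iff_of_nonneg hnn).mp hsum0
      set C := ∑ j, e j * Real.log (l j / m j) with hC
      set c := C / S with hc
      have hL : ∀ i, Real.log (l i / m i) = c * a i := by
        intro i
        have := hterm i (Finset.mem_univ i)
        have h1 : (Real.log (l i / m i) - (a i / S) * C) ^ 2 = 0 := by
          rcases mul_eq_zero.mp this with h | h
          · exact absurd h (pow_ne_zero 2 (ne_of_gt (hepos i)))
          · exact h
        have h2 : Real.log (l i / m i) = (a i / S) * C := by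
          have := pow_eq_zero_iff (n := 2) (by norm_num) |>.mp h1
          linarith
        rw [h2, hc]; field_simp
      have hli : ∀ i, l i = m i * Real.exp (c * a i) := by
        intro i
        have hpos : 0 < l i / m i := div_pos (hl.1 i) (hm.1 i)
        have : l i / m i = Real.exp (c * a i) := by
          rw [← hL i, Real.exp_log hpos]
        rw [(div_eq_iff (ne_of_gt (hm.1 i))).mp this]
        ring
      have hsum : ∑ i, m i * Real.exp (c * a i) = ∑ i, m i := by
        rw [← Finset.sum_congr rfl (fun i _ => hli i), hl.2, hm.2]
      have hc0 : c = 0 := by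
        by_contra hc0
        rcases lt_or_gt_of_ne hc0 with hlt | hgt
        · have : ∑ i, m i * Real.exp (c * a i) < ∑ i, m i := by
            apply Finset.sum_lt_sum_of_nonempty hne
            intro i _
            have : Real.exp (c * a i) < 1 := by
              rw [← Real.exp_zero]
              exact Real.exp_lt_exp.mpr (mul_neg_of_neg_of_pos hlt (ha i))
            nlinarith [hm.1 i]
          linarith
        · have : ∑ i, m i < ∑ i, m i * Real.exp (c * a i) := by
            apply Finset.sum_lt_sum_of_nonempty hne
            intro i _
            have : 1 < Real.exp (c * a i) := by
              rw [← Real.exp_zero]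
              exact Real.exp_lt_exp.mpr (mul_pos hgt (ha i))
            nlinarith [hm.1 i]
          linarith
      funext i
      rw [hli i, hc0, zero_mul, Real.exp_zero, mul_one]
    · intro h
      subst h
      rw [hd]
      have : ∀ i, Real.log (l i / l i) = 0 := by
        intro i
        rw [div_self (ne_of_gt (hl.1 i)), Real.log_one]
      simp [this]
  · intro l m hl hm
    rw [hd, hd]
    congr 1
    apply Finset.sum_congr rfl
    intro i _
    have hneg : ∀ j, Real.log (m j / l j) = -Real.log (l j / m j) := by
      intro j
      rw [← Real.log_inv, inv_div]
    have hsum : (∑ j, e j * Real.log (m j / l j)) = -∑ j, e j * Real.log (l j / m j) := by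
      simp [hneg, mul_neg, Finset.sum_neg_distrib]
    rw [hneg i, hsum]
    ring
  · intro l m p hl hm hp
    rw [hd, hd, hd]
    set u : Fin n → ℝ := fun i =>
      e i * (Real.log (l i / m i) - (a i / S) * ∑ j, e j * Real.log (l j / m j)) with hu
    set v : Fin n → ℝ := fun i =>
      e i * (Real.log (m i / p i) - (a i / S) * ∑ j, e j * Real.log (m j / p j)) with hv
    have hlog : ∀ j, Real.log (l j / p j) = Real.log (l j / m j) + Real.log (m j / p j) := by
      intro j
      have h1 := (hl.1 j).ne'
      have h2 := (hm.1 j).ne'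
      have h3 := (hp.1 j).ne'
      rw [show l j / p j = (l j / m j) * (m j / p j) by field_simp,
        Real.log_mul (div_ne_zero h1 h2) (div_ne_zero h2 h3)]
    have h1 : (∑ i, (e i) ^ 2 *
        (Real.log (l i / p i) - (a i / S) * ∑ j, e j * Real.log (l j / p j)) ^ 2)
        = ∑ i, (u i + v i) ^ 2 := by
      apply Finset.sum_congr rfl
      intro i _
      have hsum : (∑ j, e j * Real.log (l j / p j)) =
          (∑ j, e j * Real.log (l j / m j)) + ∑ j, e j * Real.log (m j / p j) := by
        rw [← Finset.sum_add_distrib]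
        exact Finset.sum_congr rfl (fun j _ => by rw [hlog j]; ring)
      rw [hlog i, hsum, hu, hv]
      ring
    rw [h1]
    have h2 : (∑ i, (e i) ^ 2 *
        (Real.log (l i / m i) - (a i / S) * ∑ j, e j * Real.log (l j / m j)) ^ 2)
        = ∑ i, (u i) ^ 2 :=
      Finset.sum_congr rfl (fun i _ => by rw [hu]; ring)
    have h3 : (∑ i, (e i) ^ 2 *
        (Real.log (m i / p i) - (a i / S) * ∑ j, e j * Real.log (m j / p j)) ^ 2)
        = ∑ i, (v i) ^ 2 :=
      Finset.sum_congr rfl (fun i _ => by rw [hv]; ring)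
    rw [h2, h3]
    exact sqrt_sum_sq_add_le u v
end

section
/- Let n ≥ 2, let a : Fin n → ℝ with a i > 0 for all i, and let v, w : Fin n → ℝ with v i > 0 and w i > 0 for all i. Then the following are equivalent: (i) there exists α > 0 such that v i = w i * α ^ (a i) for all i (i.e. v and w lie in the same equivalence class determined by the subgroup H_a); (ii) (v i)^(a j) * (w j)^(a i) = (w i)^(a j) * (v j)^(a i) for all i, j, i.e. (v i)^(a j)/(v j)^(a i) = (w i)^(a j)/(w j)^(a i) for all i, j. -/
open Real Finset

/-- generalized scale invariance.  Two positive vectors lie in the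
same `H_a`-equivalence class iff all the generalized ratios
`(v i)^(a j) / (v j)^(a i)` coincide with those of `w`.  Real powers are
`Real.rpow`. -/
theorem stmt12 (n : ℕ) (hn : 2 ≤ n) (a : Fin n → ℝ) (ha : ∀ i, 0 < a i)
    (v w : Fin n → ℝ) (hv : ∀ i, 0 < v i) (hw : ∀ i, 0 < w i) :
    (∃ α : ℝ, 0 < α ∧ ∀ i, v i = w i * α ^ (a i)) ↔
    (∀ i j, (v i) ^ (a j) * (w j) ^ (a i) = (w i) ^ (a j) * (v j) ^ (a i)) := by
  constructor
  · rintro ⟨α, hα, h⟩ i j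
    rw [h i, h j, Real.mul_rpow (hw i).le (Real.rpow_pos_of_pos hα _).le,
      Real.mul_rpow (hw j).le (Real.rpow_pos_of_pos hα _).le,
      ← Real.rpow_mul hα.le, ← Real.rpow_mul hα.le, mul_comm (a i) (a j)]
    ring
  · intro h
    have h0 : (0 : ℕ) < n := by omega
    set z : Fin n := ⟨0, h0⟩
    refine ⟨(v z / w z) ^ ((a z)⁻¹), Real.rpow_pos_of_pos (div_pos (hv z) (hw z)) _, ?_⟩
    intro i
    have key := h i z
    have h1 : (v i / w i) ^ (a z) = (v z / w z) ^ (a i) := by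
      rw [Real.div_rpow (hv i).le (hw i).le, Real.div_rpow (hv z).le (hw z).le]
      rw [div_eq_div_iff (Real.rpow_pos_of_pos (hw i) _).ne' (Real.rpow_pos_of_pos (hw z) _).ne']
      linarith [key]
    have h2 : v i / w i = ((v z / w z) ^ (a z)⁻¹) ^ a i := by
      have := congrArg (· ^ (a z)⁻¹) h1
      rw [← Real.rpow_mul (div_pos (hv i) (hw i)).le,
        ← Real.rpow_mul (div_pos (hv z) (hw z)).le,
        mul_inv_cancel₀ (ha z).ne', Real.rpow_one, mul_comm,
        Real.rpow_mul (div_pos (hv z) (hw z)).le] at this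
      exact this
    rw [div_eq_iff (hw i).ne'] at h2
    linarith [h2]
end

section
/- Let n ≥ 2, m ≥ 1, let a : Fin n → ℝ with a i > 0 for all i, let σ : Fin m → Fin n be injective, and let x : Fin n → ℝ with x i > 0 for all i. Suppose t, u, u' ∈ ℝ satisfy: ∑ i, x i * exp(a i * t) = 1 (closure of x), ∑ j, x (σ j) * exp(a (σ j) * u) = 1 (closure of the sub-part of x), and ∑ j, (x (σ j) * exp(a (σ j) * t)) * exp(a (σ j) * u') = 1 (closure of the sub-part of the closure of x). Then u = t + u', and consequently x (σ j) * exp(a (σ j) * u) = (x (σ j) * exp(a (σ j) * t)) * exp(a (σ j) * u') for all j; i.e. the subcomposition of x coincides with the subcomposition of the closure of x. -/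
open Real Finset

/-! The map `s ↦ ∑ j, c j * exp (b j * s)` with `c, b > 0` is strictly increasing, so its level
set `{1}` is a single point; multiplying each `c j` by `exp (b j * t)` shifts that point by `-t`. -/

lemma strictMono_sum_mul_exp_mul {ι : Type*} [Fintype ι] [Nonempty ι] {c b : ι → ℝ}
    (hc : ∀ i, 0 < c i) (hb : ∀ i, 0 < b i) :
    StrictMono fun s => ∑ i, c i * exp (b i * s) := fun _ _ hst =>
  sum_lt_sum_of_nonempty univ_nonempty fun i _ =>
    mul_lt_mul_of_pos_left (exp_lt_exp.2 (mul_lt_mul_of_pos_left hst (hb i))) (hc i)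

lemma mul_exp_mul_add (c b s t : ℝ) :
    c * exp (b * (s + t)) = c * exp (b * s) * exp (b * t) := by
  rw [mul_add, exp_add, mul_assoc]

theorem stmt13_general (n m : ℕ) (hm : 1 ≤ m)
    (a : Fin n → ℝ) (ha : ∀ i, 0 < a i)
    (σ : Fin m → Fin n)
    (x : Fin n → ℝ) (hx : ∀ i, 0 < x i)
    (t u u' : ℝ)
    (hu : (∑ j, x (σ j) * Real.exp (a (σ j) * u)) = 1)
    (hu' : (∑ j, (x (σ j) * Real.exp (a (σ j) * t)) * Real.exp (a (σ j) * u')) = 1) :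
    u = t + u' ∧
    ∀ j, x (σ j) * Real.exp (a (σ j) * u)
        = (x (σ j) * Real.exp (a (σ j) * t)) * Real.exp (a (σ j) * u') := by
  have : Nonempty (Fin m) := ⟨⟨0, hm⟩⟩
  have hshift : u = t + u' := by
    refine (strictMono_sum_mul_exp_mul (fun j => hx (σ j)) (fun j => ha (σ j))).injective ?_
    simp only [mul_exp_mul_add, hu, hu']
  refine ⟨hshift, fun j => ?_⟩
  rw [hshift, mul_exp_mul_add]

/-- well-definedness of subcomposition on equivalence classes:
the closure parameter of the sub-part of `x` is the sum of the closure
parameter of `x` and that of the sub-part of the closure of `x`, so that the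
subcomposition of `x` coincides with the subcomposition of the closure of `x`. -/
theorem stmt13 (n m : ℕ) (hn : 2 ≤ n) (hm : 1 ≤ m)
    (a : Fin n → ℝ) (ha : ∀ i, 0 < a i)
    (σ : Fin m → Fin n) (hσ : Function.Injective σ)
    (x : Fin n → ℝ) (hx : ∀ i, 0 < x i)
    (t u u' : ℝ)
    (ht : (∑ i, x i * Real.exp (a i * t)) = 1)
    (hu : (∑ j, x (σ j) * Real.exp (a (σ j) * u)) = 1)
    (hu' : (∑ j, (x (σ j) * Real.exp (a (σ j) * t)) * Real.exp (a (σ j) * u')) = 1) :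
    u = t + u' ∧
    ∀ j, x (σ j) * Real.exp (a (σ j) * u)
        = (x (σ j) * Real.exp (a (σ j) * t)) * Real.exp (a (σ j) * u') :=
  stmt13_general n m hm a ha σ x hx t u u' hu hu'
end

section
/- Let n ≥ 2, let (Ω, 𝓕, ℙ) be a probability space, and let X : Ω → (Fin n → ℝ) be measurable with X ω ∈ Δ° for all ω. Assume ω ↦ ln(X ω i) is integrable for each i and ω ↦ ‖Log₁(X ω)‖² is integrable. Define m* : Fin n → ℝ by m* i = exp(𝔼[ln(X · i)]) / ∑ j, exp(𝔼[ln(X · j)]). Then m* ∈ Δ°, and m* is the unique Fréchet mean of X for the distance d₁: for every μ ∈ Δ°, 𝔼[d₁(m*, X)²] ≤ 𝔼[d₁(μ, X)²], with equality if and only if μ = m*. -/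
open Real Finset MeasureTheory

/-- The squared distance `d₁(λ,μ)² = ‖Log₁ λ − Log₁ μ‖²` (Euclidean norm). -/
noncomputable def d1sq (n : ℕ) (l m : Fin n → ℝ) : ℝ :=
  ∑ i, (Log1 n l i - Log1 n m i) ^ 2

lemma log1_inj {n : ℕ} (hn : 0 < n) {μ m : Fin n → ℝ} (hμ : μ ∈ simplex' n)
    (hm : m ∈ simplex' n) (h : ∀ i, Log1 n μ i = Log1 n m i) : μ = m := by
  have hn' : (n : ℝ) ≠ 0 := by positivity
  set k : ℝ := (1 / (n:ℝ)) * ((∑ j, Real.log (μ j)) - ∑ j, Real.log (m j)) with hk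
  have hlog : ∀ i, Real.log (μ i) = Real.log (m i) + k := by
    intro i
    have h' := h i
    simp only [Log1] at h'
    field_simp at h'
    have h'' : (n:ℝ) * (Real.log (μ i) * n - ∑ j, Real.log (μ j)) =
        (n:ℝ) * (Real.log (m i) * n - ∑ j, Real.log (m j)) := by ring_nf; ring_nf at h'; linear_combination (n:ℝ) * h'
    have := mul_left_cancel₀ hn' h''
    rw [hk]; field_simp; linarith
  have hexp : ∀ i, μ i = m i * Real.exp k := by
    intro i
    have h1 : μ i = Real.exp (Real.log (μ i)) := (Real.exp_log (hμ.1 i)).symm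
    rw [h1, hlog i, Real.exp_add, Real.exp_log (hm.1 i)]
  have hsum : (1:ℝ) = Real.exp k := by
    calc (1:ℝ) = ∑ i, μ i := hμ.2.symm
    _ = ∑ i, m i * Real.exp k := by simp_rw [hexp]
    _ = (∑ i, m i) * Real.exp k := by rw [Finset.sum_mul]
    _ = Real.exp k := by rw [hm.2, one_mul]
  funext i
  rw [hexp i, ← hsum, mul_one]

/-- the reclosed exponential of the coordinatewise expected
log-values is the unique Fréchet mean of a simplex-valued random variable `X`
with respect to the distance `d₁`. -/
theorem stmt17 {Ω : Type*} [MeasurableSpace Ω] (P : Measure Ω) [IsProbabilityMeasure P]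
    (n : ℕ) (hn : 2 ≤ n) (X : Ω → Fin n → ℝ) (hX : Measurable X)
    (hXs : ∀ ω, X ω ∈ simplex' n)
    (hint : ∀ i, Integrable (fun ω => Real.log (X ω i)) P)
    (hint2 : Integrable (fun ω => ∑ i, (Log1 n (X ω) i) ^ 2) P)
    (mstar : Fin n → ℝ)
    (hmstar : ∀ i, mstar i = Real.exp (∫ ω, Real.log (X ω i) ∂P) /
        ∑ j, Real.exp (∫ ω, Real.log (X ω j) ∂P)) :
    mstar ∈ simplex' n ∧
    ∀ μ ∈ simplex' n,
      (∫ ω, d1sq n mstar (X ω) ∂P) ≤ (∫ ω, d1sq n μ (X ω) ∂P) ∧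
      ((∫ ω, d1sq n μ (X ω) ∂P) = (∫ ω, d1sq n mstar (X ω) ∂P) ↔ μ = mstar) := by
  have hn0 : 0 < n := by omega
  haveI : NeZero n := ⟨by omega⟩
  have hn' : (n : ℝ) ≠ 0 := Nat.cast_ne_zero.mpr (by omega)
  set c : Fin n → ℝ := fun i => ∫ ω, Real.log (X ω i) ∂P with hc
  set S : ℝ := ∑ j, Real.exp (c j) with hS
  have hSpos : 0 < S := Finset.sum_pos (fun j _ => Real.exp_pos _) ⟨0, Finset.mem_univ 0⟩
  -- mstar ∈ simplex'
  have hms : mstar ∈ simplex' n := by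
    constructor
    · intro i; rw [hmstar i]; exact div_pos (Real.exp_pos _) hSpos
    · simp_rw [hmstar]
      rw [← Finset.sum_div, div_self (ne_of_gt hSpos)]
  -- the random variable Y i
  set Y : Fin n → Ω → ℝ := fun i ω => Log1 n (X ω) i with hY
  have hYmeas : ∀ i, Measurable (fun ω => Real.log (X ω i)) := fun i =>
    Real.measurable_log.comp ((measurable_pi_apply i).comp hX)
  have hYm : ∀ i, Measurable (Y i) := by
    intro i
    apply Measurable.sub
    · exact (hYmeas i).const_mul _
    · exact (Finset.measurable_sum univ (fun j _ => hYmeas j)).const_mul _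
  have hYint : ∀ i, Integrable (Y i) P := by
    intro i
    apply Integrable.sub
    · exact (hint i).const_mul _
    · exact (integrable_finset_sum univ (fun j _ => hint j)).const_mul _
  have hY2int : ∀ i, Integrable (fun ω => (Y i ω) ^ 2) P := by
    intro i
    apply Integrable.mono' hint2 (((hYm i).pow_const 2).aestronglyMeasurable)
    filter_upwards with ω
    rw [Real.norm_eq_abs, abs_of_nonneg (sq_nonneg _)]
    exact Finset.single_le_sum (f := fun j => (Y j ω)^2) (fun j _ => sq_nonneg _)
      (Finset.mem_univ i)
  -- b i = Log1 mstar i equals the expectation of Y i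
  set b : Fin n → ℝ := fun i => Log1 n mstar i with hb
  have hbE : ∀ i, b i = ∫ ω, Y i ω ∂P := by
    intro i
    have hEY : ∫ ω, Y i ω ∂P = (1/(n:ℝ)) * c i - (1/(n:ℝ)^2) * ∑ j, c j := by
      have : (∫ ω, Y i ω ∂P) =
          (∫ ω, (1/(n:ℝ)) * Real.log (X ω i) ∂P) -
          ∫ ω, (1/(n:ℝ)^2) * ∑ j, Real.log (X ω j) ∂P :=
        integral_sub ((hint i).const_mul _)
          ((integrable_finset_sum univ (fun j _ => hint j)).const_mul _)
      rw [this, integral_const_mul, integral_const_mul,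
        integral_finset_sum univ (fun j _ => hint j)]
    have hlogm : ∀ j, Real.log (mstar j) = c j - Real.log S := by
      intro j
      rw [hmstar j, Real.log_div (Real.exp_ne_zero _) (ne_of_gt hSpos), Real.log_exp]
    have hsumlog : ∑ j, Real.log (mstar j) = (∑ j, c j) - n * Real.log S := by
      simp_rw [hlogm]
      rw [Finset.sum_sub_distrib, Finset.sum_const, Finset.card_univ, Fintype.card_fin,
        nsmul_eq_mul]
    rw [hEY]
    show (1/(n:ℝ)) * Real.log (mstar i) - (1/(n:ℝ)^2) * ∑ j, Real.log (mstar j) = _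
    rw [hlogm i, hsumlog]
    field_simp
    ring
  -- key computation of ∫ (t - Y i)²
  have key : ∀ (t : ℝ) (i : Fin n),
      (∫ ω, (t - Y i ω)^2 ∂P) = t^2 - 2*t*(b i) + ∫ ω, (Y i ω)^2 ∂P := by
    intro t i
    have heq : (fun ω => (t - Y i ω)^2) =
        fun ω => (t^2 - (2*t) * Y i ω) + (Y i ω)^2 := by
      funext ω; ring
    have h1 : Integrable (fun ω => t^2 - (2*t) * Y i ω) P :=
      (integrable_const _).sub ((hYint i).const_mul _)
    have e1 : ∫ ω, ((t^2 - (2*t)*Y i ω) + Y i ω ^2) ∂P =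
        (∫ ω, (t^2 - (2*t)*Y i ω) ∂P) + ∫ ω, Y i ω^2 ∂P := integral_add h1 (hY2int i)
    have e2 : ∫ ω, (t^2 - (2*t)*Y i ω) ∂P =
        (∫ _ω, (t:ℝ)^2 ∂P) - ∫ ω, (2*t)*Y i ω ∂P :=
      integral_sub (integrable_const _) ((hYint i).const_mul _)
    rw [heq, e1, e2, integral_const, integral_const_mul]
    simp [← hbE i]
  have hintsq : ∀ (t : ℝ) (i : Fin n), Integrable (fun ω => (t - Y i ω)^2) P := by
    intro t i
    have heq : (fun ω => (t - Y i ω)^2) =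
        fun ω => (t^2 - (2*t) * Y i ω) + (Y i ω)^2 := by
      funext ω; ring
    rw [heq]
    exact ((integrable_const _).sub ((hYint i).const_mul _)).add (hY2int i)
  -- the Fréchet functional
  have hF : ∀ (m : Fin n → ℝ), (∫ ω, d1sq n m (X ω) ∂P) =
      ∑ i, ((Log1 n m i)^2 - 2*(Log1 n m i)*(b i) + ∫ ω, (Y i ω)^2 ∂P) := by
    intro m
    have : (fun ω => d1sq n m (X ω)) = fun ω => ∑ i, (Log1 n m i - Y i ω)^2 := rfl
    rw [this, integral_finset_sum univ (fun i _ => hintsq _ i)]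
    exact Finset.sum_congr rfl fun i _ => key _ i
  refine ⟨hms, fun μ hμ => ?_⟩
  have hdiff : (∫ ω, d1sq n μ (X ω) ∂P) - (∫ ω, d1sq n mstar (X ω) ∂P) =
      ∑ i, (Log1 n μ i - b i)^2 := by
    rw [hF μ, hF mstar, ← Finset.sum_sub_distrib]
    refine Finset.sum_congr rfl fun i _ => ?_
    have : Log1 n mstar i = b i := rfl
    rw [this]; ring
  have hnonneg : (0:ℝ) ≤ ∑ i, (Log1 n μ i - b i)^2 :=
    Finset.sum_nonneg fun i _ => sq_nonneg _
  constructor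
  · linarith [hdiff, hnonneg]
  · constructor
    · intro heq
      have hz : ∑ i, (Log1 n μ i - b i)^2 = 0 := by linarith [hdiff]
      have : ∀ i ∈ univ, (Log1 n μ i - b i)^2 = 0 :=
        (Finset.sum_eq_zero_iff_of_nonneg (fun i _ => sq_nonneg _)).mp hz
      apply log1_inj hn0 hμ hms
      intro i
      have := this i (Finset.mem_univ i)
      have := pow_eq_zero_iff (n := 2) (by norm_num) |>.mp this
      have : Log1 n μ i = b i := by linarith [this]
      exact this
    · intro heq
      rw [heq]
end

section
/- Let n ≥ 2, m ≥ 1, and let λ₁, …, λ_m ∈ Δ°. Let λ̄ = (1/m) ⊙ (λ₁ ⊕ ⋯ ⊕ λ_m) ∈ Δ° (explicitly λ̄ i = (∏ₜ λₜ i)^(1/m) / ∑ₖ (∏ₜ λₜ k)^(1/m)). Then: (i) for every μ ∈ Δ° and every s ∈ ℝ, d₁(λₜ, λ̄ ⊕ (s ⊙ μ)) = ‖Log₁(λₜ) − Log₁(λ̄) − s • Log₁(μ)‖ for each t; (ii) consequently, a point μ₁ ∈ Δ° with ‖Log₁(μ₁)‖ = 1 minimizes μ ↦ ∑ₜ infₛ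 d₁(λₜ, λ̄ ⊕ (s ⊙ μ))² over {μ ∈ Δ° : ‖Log₁(μ)‖ = 1} if and only if v₁ = Log₁(μ₁) minimizes v ↦ ∑ₜ infₛ ‖Log₁(λₜ) − Log₁(λ̄) − s • v‖² over {v : Fin n → ℝ | ∑ i, v i = 0 and ‖v‖ = 1}. Hence a first principal component on the simplex corresponds exactly to a first principal component of the Log₁-transformed data. -/
open Real Finset

/-- The Euclidean norm on `Fin n → ℝ`. -/
noncomputable def EN (n : ℕ) (v : Fin n → ℝ) : ℝ :=
  Real.sqrt (∑ i, v i ^ 2)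

/-- The distance `d₁(λ,μ) = ‖Log₁ λ − Log₁ μ‖` (Euclidean norm). -/
noncomputable def d1 (n : ℕ) (l m : Fin n → ℝ) : ℝ :=
  EN n (Log1 n l - Log1 n m)

lemma sum_Log1 (n : ℕ) (l : Fin n → ℝ) : ∑ i, Log1 n l i = 0 := by
  rcases Nat.eq_zero_or_pos n with h | h
  · subst h; simp
  have hn : (n : ℝ) ≠ 0 := Nat.cast_ne_zero.mpr h.ne'
  unfold Log1
  rw [Finset.sum_sub_distrib, ← Finset.mul_sum, Finset.sum_const, Finset.card_univ,
    Fintype.card_fin, nsmul_eq_mul]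
  field_simp
  ring

lemma Log1_smul (n : ℕ) (hn : 0 < n) (c : ℝ) (hc : 0 < c) (l : Fin n → ℝ)
    (hl : ∀ i, 0 < l i) : Log1 n (fun i => c * l i) = Log1 n l := by
  funext i
  have hn' : (n : ℝ) ≠ 0 := Nat.cast_ne_zero.mpr hn.ne'
  unfold Log1
  simp only
  rw [Finset.sum_congr rfl fun j _ => Real.log_mul hc.ne' (hl j).ne',
    Finset.sum_add_distrib, Finset.sum_const, Finset.card_univ, Fintype.card_fin,
    nsmul_eq_mul, Real.log_mul hc.ne' (hl i).ne']
  field_simp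
  ring

lemma Log1_mul (n : ℕ) (a b : Fin n → ℝ) (ha : ∀ i, 0 < a i) (hb : ∀ i, 0 < b i) :
    Log1 n (fun i => a i * b i) = Log1 n a + Log1 n b := by
  funext i
  simp only [Log1, Pi.add_apply]
  rw [Real.log_mul (ha i).ne' (hb i).ne',
    Finset.sum_congr rfl fun j _ => Real.log_mul (ha j).ne' (hb j).ne',
    Finset.sum_add_distrib]
  ring

lemma Log1_rpow (n : ℕ) (s : ℝ) (a : Fin n → ℝ) (ha : ∀ i, 0 < a i) :
    Log1 n (fun i => a i ^ s) = s • Log1 n a := by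
  funext i
  simp only [Log1, Pi.smul_apply, smul_eq_mul]
  rw [Real.log_rpow (ha i),
    Finset.sum_congr rfl fun j _ => Real.log_rpow (ha j) s, ← Finset.mul_sum]
  ring

lemma Log1_pert_s18 (n : ℕ) (hn : 0 < n) (lbar μ : Fin n → ℝ) (hlb : ∀ i, 0 < lbar i)
    (hμ : ∀ i, 0 < μ i) (s : ℝ) :
    Log1 n (pert n lbar (spow n s μ)) = Log1 n lbar + s • Log1 n μ := by
  haveI : Nonempty (Fin n) := Fin.pos_iff_nonempty.mp hn
  have hpow : ∀ i, 0 < μ i ^ s := fun i => Real.rpow_pos_of_pos (hμ i) s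
  have hT : 0 < ∑ j, μ j ^ s := Finset.sum_pos (fun j _ => hpow j) Finset.univ_nonempty
  have hW : 0 < ∑ j, lbar j * μ j ^ s :=
    Finset.sum_pos (fun j _ => mul_pos (hlb j) (hpow j)) Finset.univ_nonempty
  set T := ∑ j, μ j ^ s
  set W := ∑ j, lbar j * μ j ^ s with hWdef
  have hkey : pert n lbar (spow n s μ) = fun i => (1 / W) * (lbar i * μ i ^ s) := by
    funext i
    unfold pert spow
    have hZ : ∑ j, lbar j * (μ j ^ s / T) = W / T := by
      rw [hWdef, Finset.sum_div]
      exact Finset.sum_congr rfl fun j _ => by ring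
    show lbar i * (μ i ^ s / T) / ∑ j, lbar j * (μ j ^ s / T) = _
    rw [hZ]
    field_simp
  rw [hkey, Log1_smul n hn _ (by positivity) _ (fun i => mul_pos (hlb i) (hpow i)),
    Log1_mul n lbar (fun i => μ i ^ s) hlb hpow, Log1_rpow n s μ hμ]

lemma exists_mu (n : ℕ) (hn : 0 < n) (v : Fin n → ℝ) (hv : ∑ i, v i = 0) :
    ∃ μ ∈ simplex' n, Log1 n μ = v := by
  haveI : Nonempty (Fin n) := Fin.pos_iff_nonempty.mp hn
  have hn' : (n : ℝ) ≠ 0 := Nat.cast_ne_zero.mpr hn.ne'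
  set S := ∑ j, Real.exp (n * v j) with hSdef
  have hS : 0 < S := Finset.sum_pos (fun j _ => Real.exp_pos _) Finset.univ_nonempty
  refine ⟨fun i => Real.exp (n * v i) / S,
    ⟨fun i => div_pos (Real.exp_pos _) hS, by rw [← Finset.sum_div, ← hSdef, div_self hS.ne']⟩, ?_⟩
  have h1 : (fun i => Real.exp (n * v i) / S) = fun i => (1 / S) * Real.exp (n * v i) := by
    funext i; ring
  rw [h1, Log1_smul n hn _ (by positivity) _ (fun i => Real.exp_pos _)]
  funext i
  unfold Log1
  simp only [Real.log_exp]
  rw [← Finset.mul_sum, hv]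
  simp only [mul_zero, sub_zero]
  field_simp

/-- a first principal component on the simplex corresponds
exactly to a first principal component of the `Log₁`-transformed data. -/
theorem stmt18 (n : ℕ) (hn : 2 ≤ n) (m : ℕ) (hm : 1 ≤ m)
    (lam : Fin m → Fin n → ℝ) (hlam : ∀ t, lam t ∈ simplex' n)
    (lbar : Fin n → ℝ)
    (hlbar : ∀ i, lbar i = (∏ t, lam t i) ^ (1 / (m : ℝ)) /
        ∑ k, (∏ t, lam t k) ^ (1 / (m : ℝ))) :
    (∀ μ ∈ simplex' n, ∀ s : ℝ, ∀ t : Fin m,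
      d1 n (lam t) (pert n lbar (spow n s μ))
        = EN n (Log1 n (lam t) - Log1 n lbar - s • Log1 n μ)) ∧
    (∀ μ₁ ∈ simplex' n, EN n (Log1 n μ₁) = 1 →
      ((∀ μ ∈ simplex' n, EN n (Log1 n μ) = 1 →
          (∑ t, ⨅ s : ℝ, (d1 n (lam t) (pert n lbar (spow n s μ₁))) ^ 2)
            ≤ ∑ t, ⨅ s : ℝ, (d1 n (lam t) (pert n lbar (spow n s μ))) ^ 2) ↔
        (∀ v : Fin n → ℝ, (∑ i, v i) = 0 → EN n v = 1 →
          (∑ t, ⨅ s : ℝ,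
              (EN n (Log1 n (lam t) - Log1 n lbar - s • Log1 n μ₁)) ^ 2)
            ≤ ∑ t, ⨅ s : ℝ,
                (EN n (Log1 n (lam t) - Log1 n lbar - s • v)) ^ 2))) := by
  have hn0 : 0 < n := by omega
  haveI : Nonempty (Fin n) := Fin.pos_iff_nonempty.mp hn0
  have hlb : ∀ i, 0 < lbar i := by
    intro i
    rw [hlbar i]
    have h1 : ∀ k : Fin n, 0 < (∏ t, lam t k) ^ (1 / (m : ℝ)) := fun k =>
      Real.rpow_pos_of_pos (Finset.prod_pos fun t _ => (hlam t).1 k) _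
    exact div_pos (h1 i) (Finset.sum_pos (fun k _ => h1 k) Finset.univ_nonempty)
  have key : ∀ μ ∈ simplex' n, ∀ s : ℝ, ∀ t : Fin m,
      d1 n (lam t) (pert n lbar (spow n s μ))
        = EN n (Log1 n (lam t) - Log1 n lbar - s • Log1 n μ) := by
    intro μ hμ s t
    unfold d1
    rw [Log1_pert_s18 n hn0 lbar μ hlb hμ.1 s, sub_sub]
  refine ⟨key, ?_⟩
  intro μ₁ hμ₁ hnorm₁
  have rwsum : ∀ μ ∈ simplex' n,
      (∑ t, ⨅ s : ℝ, (d1 n (lam t) (pert n lbar (spow n s μ))) ^ 2)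
        = ∑ t, ⨅ s : ℝ, (EN n (Log1 n (lam t) - Log1 n lbar - s • Log1 n μ)) ^ 2 := by
    intro μ hμ
    exact Finset.sum_congr rfl fun t _ => by
      exact congrArg _ (funext fun s => by rw [key μ hμ s t])
  constructor
  · intro h v hv hvnorm
    obtain ⟨μ, hμ, hLog⟩ := exists_mu n hn0 v hv
    have := h μ hμ (by rw [hLog]; exact hvnorm)
    rw [rwsum μ₁ hμ₁, rwsum μ hμ, hLog] at this
    exact this
  · intro h μ hμ hnorm
    have := h (Log1 n μ) (sum_Log1 n μ) hnorm
    rw [rwsum μ₁ hμ₁, rwsum μ hμ]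
    exact this
end

section
/- Let n ≥ 2, let (Ω, 𝓕, ℙ) be a probability space, and let X : Ω → (Fin n → ℝ) be measurable with X ω ∈ Δ° for all ω. Then the following are equivalent: (i) for every λ ∈ Δ°, the pushforward law under ℙ of the real random variable ω ↦ ⟪Log₁(λ), Log₁(X ω)⟫ (Euclidean inner product) is a Gaussian measure on ℝ, i.e. equals gaussianReal m v for some m ∈ ℝ and v ≥ 0 (degenerate Gaussians with v = 0 allowed); (ii) the pushforward law under ℙ of ω ↦ Log₁(X ω), as a measure on the Euclidean space ℝⁿ, is a Gaussian measure (in the sense that every continuous linear functional pushes it forward to a Gaussian measure on ℝ). -/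
open Real Finset MeasureTheory ProbabilityTheory

lemma Log1_sum_eq_zero (n : ℕ) (hn : n ≠ 0) (l : Fin n → ℝ) : ∑ i, Log1 n l i = 0 := by
  have hn' : (n : ℝ) ≠ 0 := Nat.cast_ne_zero.mpr hn
  simp only [Log1, Finset.sum_sub_distrib, ← Finset.sum_mul, Finset.sum_const,
    Finset.card_univ, Fintype.card_fin, nsmul_eq_mul]
  rw [← Finset.mul_sum]
  field_simp
  ring

lemma Log1_surj (n : ℕ) (hn : n ≠ 0) (h : Fin n → ℝ) (hsum : ∑ i, h i = 0) :
    ∃ l ∈ simplex' n, Log1 n l = h := by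
  have hn' : (n : ℝ) ≠ 0 := Nat.cast_ne_zero.mpr hn
  have hne : (Finset.univ : Finset (Fin n)).Nonempty := by
    simpa [Finset.univ_nonempty_iff, ← Fin.pos_iff_nonempty] using Nat.pos_of_ne_zero hn
  set Z := ∑ j, Real.exp ((n : ℝ) * h j) with hZdef
  have hZ : 0 < Z := Finset.sum_pos (fun j _ => Real.exp_pos _) hne
  refine ⟨fun i => Real.exp ((n : ℝ) * h i) / Z,
    ⟨fun i => div_pos (Real.exp_pos _) hZ, by rw [← Finset.sum_div, div_self hZ.ne']⟩, ?_⟩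
  funext i
  have hlog : ∀ j, Real.log (Real.exp ((n : ℝ) * h j) / Z)
      = (n : ℝ) * h j - Real.log Z := fun j => by
    rw [Real.log_div (Real.exp_ne_zero _) hZ.ne', Real.log_exp]
  simp only [Log1, hlog, Finset.sum_sub_distrib, ← Finset.mul_sum, hsum, mul_zero,
    Finset.sum_const, Finset.card_univ, Fintype.card_fin, nsmul_eq_mul]
  field_simp
  ring

/-- a simplex-valued random vector `X` is normal on the simplex
(i.e. `⟪Log₁ λ, Log₁ X⟫` is a real Gaussian for each `λ ∈ Δ°`, degenerate
Gaussians allowed) iff the law of `Log₁ ∘ X` is a Gaussian measure on `ℝⁿ`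
(every continuous linear functional has a Gaussian pushforward). -/
theorem stmt19 {Ω : Type*} [MeasurableSpace Ω] (P : Measure Ω) [IsProbabilityMeasure P]
    (n : ℕ) (hn : 2 ≤ n) (X : Ω → Fin n → ℝ) (hX : Measurable X)
    (hXs : ∀ ω, X ω ∈ simplex' n) :
    (∀ l ∈ simplex' n, ∃ (m : ℝ) (v : NNReal),
        Measure.map (fun ω => ∑ i, Log1 n l i * Log1 n (X ω) i) P
          = gaussianReal m v) ↔
    (∀ L : (Fin n → ℝ) →L[ℝ] ℝ, ∃ (m : ℝ) (v : NNReal),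
        Measure.map (fun ω => L (Log1 n (X ω))) P = gaussianReal m v) := by
  have hn0 : n ≠ 0 := by omega
  have hn' : (n : ℝ) ≠ 0 := Nat.cast_ne_zero.mpr hn0
  constructor
  · intro H L
    set c : Fin n → ℝ := fun i => L (Pi.single i 1) with hc
    have hLrepr : ∀ ξ : Fin n → ℝ, L ξ = ∑ i, ξ i * c i := by
      intro ξ
      conv_lhs => rw [← Finset.univ_sum_single ξ]
      rw [map_sum]
      refine Finset.sum_congr rfl fun i _ => ?_
      have : (Pi.single i (ξ i) : Fin n → ℝ) = ξ i • (Pi.single i (1 : ℝ) : Fin n → ℝ) := by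
        funext j
        by_cases hj : j = i <;> simp [Pi.single_apply, hj]
      rw [this, L.map_smul, smul_eq_mul]
    set h : Fin n → ℝ := fun i => c i - (∑ j, c j) / n with hh
    have hsum : ∑ i, h i = 0 := by
      simp only [hh, Finset.sum_sub_distrib, Finset.sum_const, Finset.card_univ,
        Fintype.card_fin, nsmul_eq_mul]
      field_simp
      ring
    obtain ⟨l, hl, hLog⟩ := Log1_surj n hn0 h hsum
    obtain ⟨m, v, hmv⟩ := H l hl
    refine ⟨m, v, ?_⟩
    rw [← hmv]
    congr 1
    funext ω
    rw [hLrepr, hLog]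
    have hzero : ∑ i, Log1 n (X ω) i = 0 := Log1_sum_eq_zero n hn0 _
    have e1 : ∑ i, Log1 n (X ω) i * h i = ∑ i, Log1 n (X ω) i * c i := by
      simp only [hh, mul_sub, Finset.sum_sub_distrib, ← Finset.sum_mul, hzero, zero_mul,
        sub_zero]
    trans (∑ i, Log1 n (X ω) i * h i)
    · exact e1.symm
    · exact Finset.sum_congr rfl fun i _ => mul_comm _ _
  · intro H l hl
    let L : (Fin n → ℝ) →L[ℝ] ℝ := LinearMap.toContinuousLinearMap
      { toFun := fun ξ => ∑ i, Log1 n l i * ξ i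
        map_add' := fun x y => by simp [mul_add, Finset.sum_add_distrib]
        map_smul' := fun r x => by simp [Finset.mul_sum, mul_comm, mul_left_comm] }
    obtain ⟨m, v, hmv⟩ := H L
    exact ⟨m, v, hmv⟩
end
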